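/- Gaifman-style uniform extension of homomorphisms: let T be a theory uniformly co-ordinatised over an inhabited formula ψ (with witnesses Θ), let M, N be models of T, and let m⃗ ∈ ψ(M), n⃗ ∈ ψ(N). Then there is at most one map f : M → N with f(m⃗) = n⃗ (componentwise) that preserves all the formulae θ ∈ Θ; moreover if such f exists for (m⃗,n⃗) and g exists for (n⃗,m⃗) with g∘f fixing m⃗, then f is a bijection. -/
import Mathlib


open FirstOrder

/-- Gaifman-style uniform extension of homomorphisms: for models `M`, `N` uniformly
co-ordinatised over `ψ` by `Θ`, with witnesses `m⃗ ∈ ψ(M)` and `n⃗ ∈ ψ(N)`, there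
is at most one map `f : M → N` sending `m⃗` to `n⃗` and preserving all `θ ∈ Θ`;
and if such an `f` exists together with a `θ`-preserving `g : N → M` for `(n⃗,m⃗)`
with `g ∘ f` fixing `m⃗`, then `f` is a bijection. -/
theorem uniform_coordinatisation_extension
    {L : Language} {M N : Type*} [L.Structure M] [L.Structure N] {k : ℕ}
    (ψ : L.Formula (Fin k)) {J : Type*} (θ : J → L.Formula (Fin k ⊕ Fin 1))
    (m : Fin k → M) (n : Fin k → N)
    (hψM : ψ.Realize m) (hψN : ψ.Realize n)
    -- θ implies ψ in both models
    (h1M : ∀ (j : J) (a : Fin k → M) (b : M),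
      (θ j).Realize (Sum.elim a fun _ => b) → ψ.Realize a)
    (h1N : ∀ (j : J) (a : Fin k → N) (b : N),
      (θ j).Realize (Sum.elim a fun _ => b) → ψ.Realize a)
    -- functionality in both models
    (h2M : ∀ (j : J) (a : Fin k → M) (b b' : M),
      (θ j).Realize (Sum.elim a fun _ => b) →
      (θ j).Realize (Sum.elim a fun _ => b') → b = b')
    (h2N : ∀ (j : J) (a : Fin k → N) (b b' : N),
      (θ j).Realize (Sum.elim a fun _ => b) →
      (θ j).Realize (Sum.elim a fun _ => b') → b = b')
    -- every element is a θ-witness over the fixed tuple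
    (h3M : ∀ b : M, ∃ j : J, (θ j).Realize (Sum.elim m fun _ => b))
    (h3N : ∀ b : N, ∃ j : J, (θ j).Realize (Sum.elim n fun _ => b)) :
    (∀ f g : M → N,
      ((∀ i, f (m i) = n i) ∧ ∀ (j : J) (a : M),
        (θ j).Realize (Sum.elim m fun _ => a) →
        (θ j).Realize (Sum.elim n fun _ => f a)) →
      ((∀ i, g (m i) = n i) ∧ ∀ (j : J) (a : M),
        (θ j).Realize (Sum.elim m fun _ => a) →
        (θ j).Realize (Sum.elim n fun _ => g a)) →
      f = g) ∧
    (∀ (f : M → N) (g : N → M),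
      ((∀ i, f (m i) = n i) ∧ ∀ (j : J) (a : M),
        (θ j).Realize (Sum.elim m fun _ => a) →
        (θ j).Realize (Sum.elim n fun _ => f a)) →
      ((∀ i, g (n i) = m i) ∧ ∀ (j : J) (b : N),
        (θ j).Realize (Sum.elim n fun _ => b) →
        (θ j).Realize (Sum.elim m fun _ => g b)) →
      (∀ i, g (f (m i)) = m i) →
      Function.Bijective f) := by
  constructor
  · rintro f g ⟨-, hf⟩ ⟨-, hg⟩
    funext a
    obtain ⟨j, hj⟩ := h3M a
    exact h2N j n (f a) (g a) (hf j a hj) (hg j a hj)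
  · rintro f g ⟨-, hf⟩ ⟨-, hg⟩ -
    have hgf : ∀ a : M, g (f a) = a := by
      intro a
      obtain ⟨j, hj⟩ := h3M a
      exact h2M j m _ a (hg j (f a) (hf j a hj)) hj
    have hfg : ∀ b : N, f (g b) = b := by
      intro b
      obtain ⟨j, hj⟩ := h3N b
      exact h2N j n _ b (hf j (g b) (hg j b hj)) hj
    exact ⟨Function.LeftInverse.injective hgf, Function.RightInverse.surjective hfg⟩
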